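/- Let h < 0 and n ≥ 1, and consider the splitting model on Z^d (d ≥ 1) with any valid splitting order; assume the model stabilizes (which holds since h < 1/2), so T is finite and contains the origin. Let x₀ ∈ T be a site that has a nearest neighbor outside T. Then there is a nearest-neighbor path x₀ ∼ x₁ ∼ x₂ ∼ ⋯ ∼ x_m = 0 with all x_k ∈ T such that u(x_{k+1}) > u(x_k) − (2d/(2d−1))·h for all k = 0, …, m−1 (note −h > 0, so u strictly increases along the path). -/

import Mathlib

open scoped BigOperators

/-- The nearest neighbor of `x ∈ ℤ^d` obtained by shifting coordinate `i` by `ε`. -/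
def nbr {d : ℕ} (x : Fin d → ℤ) (i : Fin d) (ε : ℤ) : Fin d → ℤ :=
  Function.update x i (x i + ε)

/-- Nearest-neighbor adjacency in `ℤ^d`. -/
def Adj {d : ℕ} (x y : Fin d → ℤ) : Prop :=
  (∑ i, |x i - y i|) = 1

/-- The splitting model on `ℤ^d` with initial mass `n` at the origin and background
mass `h` at every other site, together with a splitting order: `S (t+1)` is the set
of sites that split at time `t+1` (a subset of the sites unstable at time `t`,
i.e. those of mass `≥ 1`), and the mass `η` evolves by Zhang's toppling rule:
a splitting site loses all its mass, distributing a fraction `1/(2d)` of it to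
each of its `2d` nearest neighbors. -/
structure SplittingModel (d : ℕ) (n h : ℝ) where
  η : ℕ → (Fin d → ℤ) → ℝ
  S : ℕ → Set (Fin d → ℤ)
  init_origin : η 0 0 = n
  init_other : ∀ x : Fin d → ℤ, x ≠ 0 → η 0 x = h
  S_zero : S 0 = ∅
  S_subset : ∀ t, S (t + 1) ⊆ {x | 1 ≤ η t x}
  evolve : ∀ t x, η (t + 1) x =
      (S (t + 1))ᶜ.indicator (η t) x
        + (1 / (2 * (d : ℝ))) * ∑ i : Fin d,
            ((S (t + 1)).indicator (η t) (nbr x i 1)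
              + (S (t + 1)).indicator (η t) (nbr x i (-1)))

namespace SplittingModel

variable {d : ℕ} {n h : ℝ}

/-- A valid splitting order: some unstable site splits whenever there is an unstable
site, and every site that is unstable at some time eventually splits. -/
def Valid (M : SplittingModel d n h) : Prop :=
  (∀ t, {x | 1 ≤ M.η t x}.Nonempty → (M.S (t + 1)).Nonempty) ∧
    (∀ t x, 1 ≤ M.η t x → ∃ t₀, 1 ≤ t₀ ∧ x ∈ M.S (t + t₀))

/-- The parallel splitting order (the splitting automaton): at every time step,
every unstable site splits. -/
def Parallel (M : SplittingModel d n h) : Prop :=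
  ∀ t, M.S (t + 1) = {x | 1 ≤ M.η t x}

/-- The set of sites that split at least once up to (and including) time `t`. -/
def Tt (M : SplittingModel d n h) (t : ℕ) : Set (Fin d → ℤ) :=
  ⋃ t' ∈ Set.Icc 1 t, M.S t'

/-- The set of sites that split at least once. -/
def T (M : SplittingModel d n h) : Set (Fin d → ℤ) :=
  ⋃ t, M.S t

/-- The model stabilizes: every site splits only finitely many times. -/
def Stabilizes (M : SplittingModel d n h) : Prop :=
  ∀ x, {t | x ∈ M.S t}.Finite

/-- The total mass `u x` emitted from the site `x` during stabilization. -/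
noncomputable def emit (M : SplittingModel d n h) (x : Fin d → ℤ) : ℝ :=
  ∑' t : ℕ, (M.S (t + 1)).indicator (M.η t) x

end SplittingModel

/-!
Since `h < 0`, the excess mass `η - h` is nonnegative and conserved, while every site that has
split keeps mass `≥ 0`; hence `T` is finite. At a site `x ≠ 0` of `T` the final mass
`h + (∑_{y ∼ x} u y) / (2d) - u x` is nonnegative, so if one neighbor of `x` has `u` below `u x`,
the largest `u` among the other `2d - 1` neighbors exceeds `u x - 2d h / (2d - 1)`. Starting
from `x₀`, whose neighbor outside `T` has `u = 0 < 1 ≤ u x₀`, we repeatedly move to such a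
neighbor; `u` strictly increases, so the walk cannot go on forever in the finite set `T`, and it
can only stop at the origin.
-/

open Filter Function

theorem nbr_eq_add {d : ℕ} (x : Fin d → ℤ) (i : Fin d) (ε : ℤ) :
    nbr x i ε = x + Pi.single i ε := by
  ext j
  by_cases hj : j = i
  · subst hj; simp [nbr]
  · simp [nbr, hj]

theorem adj_nbr {d : ℕ} (x : Fin d → ℤ) (i : Fin d) (u : ℤˣ) : Adj x (nbr x i u) := by
  rw [Adj, Finset.sum_eq_single i (fun j _ hj => by simp [nbr, hj]) (by simp)]
  simpa [nbr] using Int.isUnit_iff_abs_eq.mp u.isUnit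

theorem Adj.symm {d : ℕ} {x y : Fin d → ℤ} (hxy : Adj x y) : Adj y x := by
  simpa only [Adj, abs_sub_comm] using hxy

theorem Adj.exists_eq_nbr {d : ℕ} {x y : Fin d → ℤ} (hxy : Adj x y) :
    ∃ (i : Fin d) (u : ℤˣ), y = nbr x i u := by
  rw [Adj] at hxy
  obtain ⟨i, hi⟩ : ∃ i, x i ≠ y i := by
    by_contra! hxy'
    simp [hxy'] at hxy
  have hsplit := Finset.add_sum_erase Finset.univ (fun j => |x j - y j|) (Finset.mem_univ i)
  have hrest := Finset.sum_nonneg fun j (_ : j ∈ Finset.univ.erase i) => abs_nonneg (x j - y j)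
  have hpos : 0 < |x i - y i| := abs_pos.mpr (sub_ne_zero.mpr hi)
  have hunit : |y i - x i| = 1 := by rw [abs_sub_comm]; omega
  have hrest0 : ∀ j ∈ Finset.univ.erase i, |x j - y j| = 0 :=
    (Finset.sum_eq_zero_iff_of_nonneg fun j _ => abs_nonneg _).mp (by omega)
  refine ⟨i, (Int.isUnit_iff_abs_eq.mpr hunit).unit, funext fun j => ?_⟩
  by_cases hj : j = i
  · subst hj; simp [nbr]
  · rw [nbr, Function.update_of_ne hj]
    exact (sub_eq_zero.mp (abs_eq_zero.mp (hrest0 j (by simp [hj])))).symm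

/-- The `2d` directions of `ℤ^d` are indexed by `Fin d × ℤˣ`. -/
def nbrSum {d : ℕ} {M : Type*} [AddCommMonoid M] (f : (Fin d → ℤ) → M) (x : Fin d → ℤ) : M :=
  ∑ p : Fin d × ℤˣ, f (nbr x p.1 p.2)

section NbrSum

variable {d : ℕ} {M : Type*} [AddCommMonoid M]

theorem nbrSum_eq_sum_one_neg_one (f : (Fin d → ℤ) → M) (x : Fin d → ℤ) :
    nbrSum f x = ∑ i, (f (nbr x i 1) + f (nbr x i (-1))) := by
  simp [nbrSum, Fintype.sum_prod_type, UnitsInt.univ]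

theorem nbrSum_add (f g : (Fin d → ℤ) → M) (x : Fin d → ℤ) :
    nbrSum (f + g) x = nbrSum f x + nbrSum g x :=
  Finset.sum_add_distrib

theorem nbrSum_nonneg [PartialOrder M] [IsOrderedAddMonoid M] {f : (Fin d → ℤ) → M}
    (hf : 0 ≤ f) (x : Fin d → ℤ) : 0 ≤ nbrSum f x :=
  Finset.sum_nonneg fun _ _ => hf _

theorem Function.HasFiniteSupport.comp_nbr {f : (Fin d → ℤ) → M} (hf : f.HasFiniteSupport)
    (i : Fin d) (ε : ℤ) : (fun x => f (nbr x i ε)).HasFiniteSupport := by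
  simp_rw [nbr_eq_add]
  exact hf.fun_comp_of_injective (add_left_injective _)

theorem Function.HasFiniteSupport.nbrSum {f : (Fin d → ℤ) → M} (hf : f.HasFiniteSupport) :
    (nbrSum f).HasFiniteSupport :=
  HasFiniteSupport.sum (f := fun (p : Fin d × ℤˣ) x => f (nbr x p.1 p.2))
    (fun p => hf.comp_nbr p.1 p.2) Finset.univ

theorem finsum_nbrSum {f : (Fin d → ℤ) → M} (hf : f.HasFiniteSupport) :
    ∑ᶠ x, nbrSum f x = (2 * d) • ∑ᶠ x, f x := by
  have hshift : ∀ p : Fin d × ℤˣ, ∑ᶠ x, f (nbr x p.1 p.2) = ∑ᶠ x, f x := fun p => by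
    simp_rw [nbr_eq_add]
    exact finsum_comp_equiv (Equiv.addRight _)
  unfold nbrSum
  rw [finsum_sum_comm _ _ fun p _ => hf.comp_nbr p.1 p.2]
  simp_rw [hshift, Finset.sum_const, Finset.card_univ, Fintype.card_prod, Fintype.card_fin,
    Fintype.card_units_int, mul_comm]

end NbrSum

theorem exists_adj_lt_of_add_mul_lt_nbrSum {d : ℕ} {g : (Fin d → ℤ) → ℝ} {x z : Fin d → ℤ} {a : ℝ}
    (hz : Adj x z) (hlt : g z + (2 * d - 1) * a < nbrSum g x) : ∃ y, Adj x y ∧ a < g y := by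
  obtain ⟨i, u, rfl⟩ := hz.exists_eq_nbr
  have hd : 1 ≤ d * 2 := by have := i.pos; omega
  have hcard : ((Finset.univ.erase (i, u)).card : ℝ) = 2 * d - 1 := by
    rw [Finset.card_erase_of_mem (Finset.mem_univ _), Finset.card_univ, Fintype.card_prod,
      Fintype.card_fin, Fintype.card_units_int, Nat.cast_sub hd]
    push_cast; ring
  rw [nbrSum, ← Finset.add_sum_erase _ _ (Finset.mem_univ (i, u))] at hlt
  obtain ⟨p, -, hp⟩ := Finset.exists_lt_of_sum_lt (f := fun _ => a)
    (g := fun p : Fin d × ℤˣ => g (nbr x p.1 p.2)) (s := Finset.univ.erase (i, u))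
    (by rw [Finset.sum_const, nsmul_eq_mul, hcard]; linarith)
  exact ⟨_, adj_nbr x p.1 p.2, hp⟩

theorem exists_path_of_forall_exists {α β : Type*} [Preorder β] {P : α → Prop}
    {R : α → α → Prop} (f : α → β) {a b : α} (hP : {x | P x}.Finite)
    (hR : ∀ x y, R x y → f x < f y) (step : ∀ x, P x → x ≠ b → ∃ y, P y ∧ R x y) (ha : P a) :
    ∃ (m : ℕ) (p : ℕ → α), p 0 = a ∧ p m = b ∧ (∀ k ≤ m, P (p k)) ∧
      ∀ k < m, R (p k) (p (k + 1)) := by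
  classical
  have : ∀ x, ∃ y, P x → x ≠ b → P y ∧ R x y := fun x =>
    if hx : P x ∧ x ≠ b then (step x hx.1 hx.2).imp fun _ hy _ _ => hy
    else ⟨x, fun h₁ h₂ => (hx ⟨h₁, h₂⟩).elim⟩
  choose g hg using this
  set p : ℕ → α := fun k => g^[k] a
  have hp : ∀ k, p (k + 1) = g (p k) := fun k => iterate_succ_apply' g k a
  have hPp : ∀ k, (∀ j < k, p j ≠ b) → P (p k) := by
    intro k
    induction k with
    | zero => exact fun _ => ha
    | succ k ih =>
      intro hne
      rw [hp]
      exact (hg _ (ih fun j hj => hne j (by omega)) (hne k (by omega))).1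
  have hreach : ∃ k, p k = b := by
    by_contra! hne
    have hmono : StrictMono (f ∘ p) := strictMono_nat_of_lt_succ fun k => by
      simp only [comp, hp]
      exact hR _ _ (hg _ (hPp k fun j _ => hne j) (hne k)).2
    exact Set.infinite_range_of_injective hmono.injective.of_comp
      (hP.subset (Set.range_subset_iff.2 fun k => hPp k fun j _ => hne j))
  have hbefore : ∀ k ≤ Nat.find hreach, ∀ j < k, p j ≠ b := fun k hk j hj =>
    Nat.find_min hreach (by omega)
  refine ⟨Nat.find hreach, p, rfl, Nat.find_spec hreach, fun k hk => hPp k (hbefore k hk),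
    fun k hk => ?_⟩
  rw [hp]
  exact (hg _ (hPp k (hbefore k hk.le)) (Nat.find_min hreach hk)).2

namespace SplittingModel

variable {d : ℕ} {n h : ℝ} (M : SplittingModel d n h)

/-- The mass emitted from a site at time `t + 1`. -/
noncomputable def emitAt (t : ℕ) : (Fin d → ℤ) → ℝ :=
  (M.S (t + 1)).indicator (M.η t)

noncomputable def emitUpTo (t : ℕ) (x : Fin d → ℤ) : ℝ :=
  ∑ s ∈ Finset.range t, M.emitAt s x

theorem emitAt_nonneg (t : ℕ) : 0 ≤ M.emitAt t := fun x =>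
  Set.indicator_nonneg (fun _ hx => zero_le_one.trans (M.S_subset t hx)) x

theorem emitAt_of_mem {t : ℕ} {x : Fin d → ℤ} (hx : x ∈ M.S (t + 1)) : M.emitAt t x = M.η t x :=
  Set.indicator_of_mem hx _

theorem emitAt_of_notMem {t : ℕ} {x : Fin d → ℤ} (hx : x ∉ M.S (t + 1)) : M.emitAt t x = 0 :=
  Set.indicator_of_notMem hx _

theorem inflow_nonneg (t : ℕ) (x : Fin d → ℤ) : 0 ≤ nbrSum (M.emitAt t) x / (2 * d) :=
  div_nonneg (nbrSum_nonneg (M.emitAt_nonneg t) x) (by positivity)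

theorem eta_succ (t : ℕ) (x : Fin d → ℤ) :
    M.η (t + 1) x = M.η t x - M.emitAt t x + nbrSum (M.emitAt t) x / (2 * d) := by
  rw [M.evolve, Set.indicator_compl, nbrSum_eq_sum_one_neg_one, emitAt]
  simp only [Pi.sub_apply]
  ring

theorem le_eta (hh : h ≤ 0) (hn : h ≤ n) (t : ℕ) (x : Fin d → ℤ) : h ≤ M.η t x := by
  induction t generalizing x with
  | zero =>
    by_cases hx : x = 0
    · rw [hx, M.init_origin]; exact hn
    · rw [M.init_other x hx]
  | succ t ih =>
    have hin := M.inflow_nonneg t x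
    rw [M.eta_succ]
    by_cases hx : x ∈ M.S (t + 1)
    · rw [M.emitAt_of_mem hx]; linarith
    · rw [M.emitAt_of_notMem hx]; linarith [ih x]

theorem mem_Tt_succ {t : ℕ} {x : Fin d → ℤ} :
    x ∈ M.Tt (t + 1) ↔ x ∈ M.S (t + 1) ∨ x ∈ M.Tt t := by
  simp only [Tt, Set.mem_iUnion, Set.mem_Icc, exists_prop]
  constructor
  · rintro ⟨s, ⟨hs₁, hs⟩, hx⟩
    rcases Nat.lt_or_eq_of_le hs with hs | rfl
    exacts [Or.inr ⟨s, ⟨hs₁, by omega⟩, hx⟩, Or.inl hx]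
  · rintro (hx | ⟨s, ⟨hs₁, hs⟩, hx⟩)
    exacts [⟨t + 1, ⟨by omega, le_rfl⟩, hx⟩, ⟨s, ⟨hs₁, by omega⟩, hx⟩]

/-- Splitting empties a site, and a site that does not split only gains mass. -/
theorem eta_nonneg_of_mem_Tt {t : ℕ} {x : Fin d → ℤ} (hx : x ∈ M.Tt t) : 0 ≤ M.η t x := by
  induction t with
  | zero => simp [Tt] at hx
  | succ t ih =>
    have hin := M.inflow_nonneg t x
    rw [M.eta_succ]
    by_cases hS : x ∈ M.S (t + 1)
    · rw [M.emitAt_of_mem hS]; linarith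
    · rw [M.emitAt_of_notMem hS]
      linarith [ih ((M.mem_Tt_succ.mp hx).resolve_left hS)]

theorem eventually_mem_Tt {x : Fin d → ℤ} (hx : x ∈ M.T) : ∀ᶠ t in atTop, x ∈ M.Tt t := by
  obtain ⟨s, hs⟩ := Set.mem_iUnion.mp hx
  have hs₁ : 1 ≤ s := Nat.one_le_iff_ne_zero.mpr fun h0 => by simp [h0, M.S_zero] at hs
  exact eventually_atTop.2 ⟨s, fun t ht => Set.mem_biUnion ⟨hs₁, ht⟩ hs⟩

theorem hasFiniteSupport_emitAt (hh : h < 1) {t : ℕ}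
    (hη : (fun x => M.η t x - h).HasFiniteSupport) : (M.emitAt t).HasFiniteSupport := by
  refine Set.Finite.subset hη fun x hx => ?_
  have hS : x ∈ M.S (t + 1) := by
    by_contra hS
    exact hx (M.emitAt_of_notMem hS)
  have := M.S_subset t hS
  simp only [Set.mem_ofPred_eq] at this
  exact sub_ne_zero.mpr (by linarith)

theorem excess_conservation (hd : d ≠ 0) (hh : h < 1) (t : ℕ) :
    (fun x => M.η t x - h).HasFiniteSupport ∧ ∑ᶠ x, (M.η t x - h) = n - h := by
  induction t with
  | zero =>
    have h0 : ∀ x, x ≠ 0 → M.η 0 x - h = 0 := fun x hx => by rw [M.init_other x hx, sub_self]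
    refine ⟨(Set.finite_singleton 0).subset fun x hx => ?_, ?_⟩
    · by_contra hx0
      exact hx (h0 x hx0)
    · rw [finsum_eq_single _ 0 h0, M.init_origin]
  | succ t ih =>
    obtain ⟨hfin, hsum⟩ := ih
    have he := M.hasFiniteSupport_emitAt hh hfin
    have hin : (fun x => nbrSum (M.emitAt t) x / (2 * d)).HasFiniteSupport := by
      simpa only [div_eq_mul_inv] using he.nbrSum.fun_mul_left fun _ => ((2 : ℝ) * d)⁻¹
    have hexcess : (fun x => M.η (t + 1) x - h) = fun x =>
        (M.η t x - h) - M.emitAt t x + nbrSum (M.emitAt t) x / (2 * d) :=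
      funext fun x => by rw [M.eta_succ]; ring
    rw [hexcess]
    have hout : (fun x => M.η t x - h - M.emitAt t x).HasFiniteSupport := hfin.fun_sub he
    refine ⟨hout.fun_add hin, ?_⟩
    rw [finsum_add_distrib hout hin, finsum_sub_distrib hfin he, hsum]
    simp only [div_eq_mul_inv]
    rw [← finsum_mul, finsum_nbrSum he, nsmul_eq_mul]
    have : (d : ℝ) ≠ 0 := Nat.cast_ne_zero.mpr hd
    push_cast
    field_simp
    ring

theorem card_mul_neg_le (hd : d ≠ 0) (hh : h < 0) (hn : h ≤ n) (A : Finset (Fin d → ℤ))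
    (hA : ↑A ⊆ M.T) : A.card * (-h) ≤ n - h := by
  obtain ⟨t, ht⟩ :=
    ((Filter.eventually_all_finset A).2 fun x hx => M.eventually_mem_Tt (hA hx)).exists
  obtain ⟨hfin, hsum⟩ := M.excess_conservation hd (by linarith) t
  have hfin : (support fun x => M.η t x - h).Finite := hfin
  calc (A.card : ℝ) * (-h) ≤ ∑ x ∈ A, (M.η t x - h) := by
        rw [← nsmul_eq_mul]
        exact Finset.card_nsmul_le_sum _ _ _ fun x hx => by
          linarith [M.eta_nonneg_of_mem_Tt (ht x hx)]
    _ ≤ ∑ x ∈ A ∪ hfin.toFinset, (M.η t x - h) :=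
        Finset.sum_le_sum_of_subset_of_nonneg Finset.subset_union_left fun x _ _ =>
          sub_nonneg.mpr (M.le_eta hh.le hn t x)
    _ = n - h := by
        rw [← hsum, finsum_eq_sum_of_support_subset _ (s := A ∪ hfin.toFinset)
          (by rw [Finset.coe_union, Set.Finite.coe_toFinset]; exact Set.subset_union_right)]

theorem finite_T (hd : d ≠ 0) (hh : h < 0) (hn : h ≤ n) : M.T.Finite := by
  by_contra hinf
  obtain ⟨A, hA, hcard⟩ := Set.Infinite.exists_subset_card_eq hinf (⌊(n - h) / -h⌋₊ + 1)
  have hle := M.card_mul_neg_le hd hh hn A hA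
  have hlt := Nat.lt_floor_add_one ((n - h) / -h)
  rw [div_lt_iff₀ (by linarith)] at hlt
  rw [hcard] at hle
  push_cast at hle
  linarith

theorem emit_nonneg (x : Fin d → ℤ) : 0 ≤ M.emit x :=
  tsum_nonneg fun t => M.emitAt_nonneg t x

theorem emit_eq_zero_of_notMem_T {x : Fin d → ℤ} (hx : x ∉ M.T) : M.emit x = 0 := by
  have : ∀ t, M.emitAt t x = 0 := fun t =>
    M.emitAt_of_notMem fun hS => hx (Set.mem_iUnion.mpr ⟨_, hS⟩)
  show ∑' t, M.emitAt t x = 0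
  simp [this]

theorem mem_T_of_emit_pos {x : Fin d → ℤ} (hx : 0 < M.emit x) : x ∈ M.T := by
  by_contra hxT
  exact hx.ne' (M.emit_eq_zero_of_notMem_T hxT)

theorem eventually_emitUpTo_eq (hstab : M.Stabilizes) (x : Fin d → ℤ) :
    ∀ᶠ t in atTop, M.emitUpTo t x = M.emit x := by
  obtain ⟨N, hN⟩ := (hstab x).bddAbove
  refine eventually_atTop.2 ⟨N, fun t ht => (tsum_eq_sum fun s hs => ?_).symm⟩
  refine M.emitAt_of_notMem fun hS => ?_
  have := hN hS
  simp only [Finset.mem_range, not_lt] at hs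
  omega

theorem one_le_emit (hstab : M.Stabilizes) {x : Fin d → ℤ} (hx : x ∈ M.T) : 1 ≤ M.emit x := by
  obtain ⟨_ | s, hs⟩ := Set.mem_iUnion.mp hx
  · simp [M.S_zero] at hs
  obtain ⟨t, ht, hst⟩ := ((M.eventually_emitUpTo_eq hstab x).and (eventually_gt_atTop s)).exists
  calc 1 ≤ M.emitAt s x := (M.emitAt_of_mem hs).symm ▸ M.S_subset s hs
    _ ≤ M.emitUpTo t x :=
        Finset.single_le_sum (fun s _ => M.emitAt_nonneg s x) (Finset.mem_range.mpr hst)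
    _ = M.emit x := ht

theorem eta_eq_init_add (t : ℕ) (x : Fin d → ℤ) :
    M.η t x = M.η 0 x + nbrSum (M.emitUpTo t) x / (2 * d) - M.emitUpTo t x := by
  induction t with
  | zero => simp [emitUpTo, nbrSum]
  | succ t ih =>
    have hsucc : M.emitUpTo (t + 1) = M.emitUpTo t + M.emitAt t :=
      funext fun y => Finset.sum_range_succ _ _
    rw [M.eta_succ, ih, hsucc, nbrSum_add, Pi.add_apply]
    ring

/-- The final mass at `x` is `h + nbrSum u x / (2d) - u x`, nonnegative since `x` has split. -/
theorem le_nbrSum_emit (hd : d ≠ 0) (hstab : M.Stabilizes) {x : Fin d → ℤ} (hxT : x ∈ M.T)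
    (hx0 : x ≠ 0) : 2 * d * (M.emit x - h) ≤ nbrSum M.emit x := by
  have hnbr : ∀ᶠ t in atTop, ∀ p : Fin d × ℤˣ,
      M.emitUpTo t (nbr x p.1 p.2) = M.emit (nbr x p.1 p.2) :=
    eventually_all.2 fun p => M.eventually_emitUpTo_eq hstab _
  obtain ⟨t, hTt, hx, hp⟩ :=
    ((M.eventually_mem_Tt hxT).and ((M.eventually_emitUpTo_eq hstab x).and hnbr)).exists
  have hsum : nbrSum (M.emitUpTo t) x = nbrSum M.emit x := Finset.sum_congr rfl fun p _ => hp p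
  have hfinal := M.eta_nonneg_of_mem_Tt hTt
  rw [M.eta_eq_init_add, M.init_other x hx0, hsum, hx] at hfinal
  have hd' : (0 : ℝ) < 2 * d := by positivity
  have := mul_le_mul_of_nonneg_left (by linarith : M.emit x - h ≤ nbrSum M.emit x / (2 * d)) hd'.le
  rwa [mul_div_cancel₀ _ hd'.ne'] at this

theorem exists_adj_emit_gt (hd : d ≠ 0) (hstab : M.Stabilizes) {x z : Fin d → ℤ}
    (hxT : x ∈ M.T) (hx0 : x ≠ 0) (hz : Adj x z) (hzx : M.emit z < M.emit x) :
    ∃ y, Adj x y ∧ M.emit x - 2 * d / (2 * d - 1) * h < M.emit y := by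
  refine exists_adj_lt_of_add_mul_lt_nbrSum hz
    (lt_of_lt_of_le ?_ (M.le_nbrSum_emit hd hstab hxT hx0))
  have h2d : (2 * d - 1 : ℝ) ≠ 0 := by
    have : (1 : ℝ) ≤ d := by exact_mod_cast Nat.one_le_iff_ne_zero.mpr hd
    exact ne_of_gt (by linarith)
  rw [mul_sub, ← mul_assoc, mul_div_cancel₀ _ h2d]
  linarith

end SplittingModel

theorem increasing_path_general {d : ℕ} (hd : 1 ≤ d) {n h : ℝ} (hh : h < 0) (hn : 1 ≤ n)
    (M : SplittingModel d n h) (hstab : M.Stabilizes)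
    (x₀ : Fin d → ℤ) (hx₀ : x₀ ∈ M.T) (hbd : ∃ y, Adj x₀ y ∧ y ∉ M.T) :
    ∃ (m : ℕ) (p : ℕ → Fin d → ℤ), p 0 = x₀ ∧ p m = 0 ∧
      (∀ k ≤ m, p k ∈ M.T) ∧
      (∀ k < m, Adj (p k) (p (k + 1))) ∧
      (∀ k < m, M.emit (p k) - (2 * (d : ℝ)) / (2 * (d : ℝ) - 1) * h < M.emit (p (k + 1))) := by
  have hd0 : d ≠ 0 := by omega
  have hgain : 0 < -(2 * (d : ℝ) / (2 * d - 1) * h) := by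
    have : (1 : ℝ) ≤ d := by exact_mod_cast hd
    exact neg_pos.mpr (mul_neg_of_pos_of_neg (div_pos (by linarith) (by linarith)) hh)
  obtain ⟨m, p, hp0, hpm, hpT, hpR⟩ := exists_path_of_forall_exists M.emit (b := 0)
    (P := fun x => x ∈ M.T ∧ ∃ z, Adj x z ∧ M.emit z < M.emit x)
    (R := fun x y => Adj x y ∧ M.emit x - 2 * d / (2 * d - 1) * h < M.emit y)
    ((M.finite_T hd0 hh (by linarith)).subset fun x hx => hx.1)
    (fun x y hxy => by linarith [hxy.2])
    (fun x ⟨hxT, z, hz, hzx⟩ hx0 => by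
      obtain ⟨y, hxy, hlt⟩ := M.exists_adj_emit_gt hd0 hstab hxT hx0 hz hzx
      have hxy' : M.emit x < M.emit y := by linarith
      exact ⟨y, ⟨M.mem_T_of_emit_pos ((M.emit_nonneg x).trans_lt hxy'), x, hxy.symm, hxy'⟩, hxy, hlt⟩)
    (by
      obtain ⟨y, hy, hyT⟩ := hbd
      refine ⟨hx₀, y, hy, ?_⟩
      linarith [M.emit_eq_zero_of_notMem_T hyT, M.one_le_emit hstab hx₀])
  exact ⟨m, p, hp0, hpm, fun k hk => (hpT k hk).1, fun k hk => (hpR k hk).1,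
    fun k hk => (hpR k hk).2⟩

/-- For the splitting model on `ℤ^d` with any valid splitting order, `h < 0`,
`n ≥ 1`, assuming the model stabilizes: from any site `x₀ ∈ T` having a neighbor
outside `T` there is a nearest-neighbor path `x₀ ∼ x₁ ∼ ⋯ ∼ x_m = 0` inside `T`
along which the emitted mass satisfies `u (x_{k+1}) > u (x_k) - (2d/(2d-1)) h`. -/
theorem increasing_path {d : ℕ} (hd : 1 ≤ d) {n h : ℝ} (hh : h < 0) (hn : 1 ≤ n)
    (M : SplittingModel d n h) (hM : M.Valid) (hstab : M.Stabilizes)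
    (x₀ : Fin d → ℤ) (hx₀ : x₀ ∈ M.T) (hbd : ∃ y, Adj x₀ y ∧ y ∉ M.T) :
    ∃ (m : ℕ) (p : ℕ → Fin d → ℤ), p 0 = x₀ ∧ p m = 0 ∧
      (∀ k ≤ m, p k ∈ M.T) ∧
      (∀ k < m, Adj (p k) (p (k + 1))) ∧
      (∀ k < m, M.emit (p k) - (2 * (d : ℝ)) / (2 * (d : ℝ) - 1) * h < M.emit (p (k + 1))) :=
  increasing_path_general hd hh hn M hstab x₀ hx₀ hbd
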